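/- Let T > 0 and let g : ℝ × [0,T] → ℝ be 2π-periodic in x and jointly smooth. Suppose Hg(x,t) := (1/(2π))·lim_{ε→0⁺} ∫_{ε<|η|<π} g(x−η,t)·cot(η/2) dη exists for all (x,t), that Hg is jointly smooth, set Λg := ∂_x(Hg), and assume ∂_t g = −Λg + ∂_x( g²·Hg / (1+g²) ) pointwise on ℝ × [0,T]. Then for every t ∈ [0,T]: ∫_{−π}^{π} [ g(x,t)·log(1+g(x,t)²) + 2·arctan(g(x,t)) ] dx = ∫_{−π}^{π} [ g(x,0)·log(1+g(x,0)²) + 2·arctan(g(x,0)) ] dx + ∫₀^t ∫_{−π}^{π} Λg(x,s)/(1+g(x,s)²) dx ds. -/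

import Mathlib

open MeasureTheory Filter Set

/-- The truncated principal-value integral for the periodic Hilbert transform. -/
noncomputable def pvHilbertIntegralT (u : ℝ → ℝ) (x ε : ℝ) : ℝ :=
  (1 / (2 * Real.pi)) *
    ∫ η in {η : ℝ | ε < |η| ∧ |η| < Real.pi},
      u (x - η) * (Real.cos (η / 2) / Real.sin (η / 2))

/-- `Hu(x) = L` in the periodic principal-value sense. -/
def HasPVHilbertT (u : ℝ → ℝ) (x L : ℝ) : Prop :=
  Tendsto (fun ε => pvHilbertIntegralT u x ε) (nhdsWithin 0 (Set.Ioi 0)) (nhds L)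

section Aux

lemma slice_contDiff {T : ℝ} {F : ℝ × ℝ → ℝ}
    (hF : ContDiffOn ℝ (⊤ : ℕ∞) F (univ ×ˢ Icc (0:ℝ) T)) {t : ℝ} (ht : t ∈ Icc (0:ℝ) T) :
    ContDiff ℝ (⊤ : ℕ∞) (fun y => F (y, t)) := by
  rw [← contDiffOn_univ]
  exact hF.comp ((contDiff_id.prodMk contDiff_const).contDiffOn)
    (fun y _ => by simp [ht])

lemma slice_hasDerivAt {T : ℝ} {F : ℝ × ℝ → ℝ}
    (hF : ContDiffOn ℝ (⊤ : ℕ∞) F (univ ×ˢ Icc (0:ℝ) T)) {t : ℝ} (ht : t ∈ Icc (0:ℝ) T) (x : ℝ) :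
    HasDerivAt (fun y => F (y, t)) (deriv (fun y => F (y, t)) x) x :=
  (((slice_contDiff hF ht).differentiable (by simp)) x).hasDerivAt

lemma slice_deriv_continuousOn {T : ℝ} (hT : 0 < T) {F : ℝ × ℝ → ℝ}
    (hF : ContDiffOn ℝ (⊤ : ℕ∞) F (univ ×ˢ Icc (0:ℝ) T)) :
    ContinuousOn (fun p : ℝ × ℝ => deriv (fun y => F (y, p.2)) p.1) (univ ×ˢ Icc (0:ℝ) T) := by
  have hu : UniqueDiffOn ℝ ((univ : Set ℝ) ×ˢ Icc (0:ℝ) T) :=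
    UniqueDiffOn.prod uniqueDiffOn_univ (uniqueDiffOn_Icc hT)
  have h0 : ContDiffOn ℝ 0 (fderivWithin ℝ F (univ ×ˢ Icc (0:ℝ) T)) (univ ×ˢ Icc (0:ℝ) T) :=
    hF.fderivWithin hu (by simp)
  have hC : ContinuousOn (fun p : ℝ × ℝ =>
      fderivWithin ℝ F (univ ×ˢ Icc (0:ℝ) T) p ((1:ℝ), (0:ℝ))) (univ ×ˢ Icc (0:ℝ) T) :=
    ((ContinuousLinearMap.apply ℝ ℝ ((1:ℝ),(0:ℝ))).continuous).comp_continuousOn h0.continuousOn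
  refine hC.congr ?_
  intro p hp
  have hdp : HasFDerivWithinAt F (fderivWithin ℝ F (univ ×ˢ Icc (0:ℝ) T) p)
      (univ ×ˢ Icc (0:ℝ) T) p :=
    (hF.differentiableOn (by simp) p hp).hasFDerivWithinAt
  have hι : HasDerivWithinAt (fun y : ℝ => (y, p.2)) ((1:ℝ),(0:ℝ)) univ p.1 :=
    ((hasDerivAt_id p.1).prodMk (hasDerivAt_const p.1 p.2)).hasDerivWithinAt
  have hmaps : MapsTo (fun y : ℝ => (y, p.2)) univ (univ ×ˢ Icc (0:ℝ) T) := by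
    intro y _
    simp only [mem_prod, mem_univ, true_and]
    exact hp.2
  have hkey : HasDerivAt (fun y => F (y, p.2))
      (fderivWithin ℝ F (univ ×ˢ Icc (0:ℝ) T) p ((1:ℝ),(0:ℝ))) p.1 := by
    have := hdp.comp_hasDerivWithinAt p.1 hι hmaps
    rw [hasDerivWithinAt_univ] at this
    exact this
  exact hkey.deriv

lemma contOn_slice_x {T : ℝ} {F : ℝ × ℝ → ℝ}
    (hF : ContinuousOn F (univ ×ˢ Icc (0:ℝ) T)) {s : ℝ} (hs : s ∈ Icc (0:ℝ) T) :
    Continuous (fun x => F (x, s)) :=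
  hF.comp_continuous (continuous_id.prodMk continuous_const) (fun x => by simp [hs])

lemma contOn_slice_t {T : ℝ} {F : ℝ × ℝ → ℝ}
    (hF : ContinuousOn F (univ ×ˢ Icc (0:ℝ) T)) (x : ℝ) :
    ContinuousOn (fun s => F (x, s)) (Icc (0:ℝ) T) :=
  hF.comp ((continuous_const.prodMk continuous_id).continuousOn) (fun s hs => by simp [hs])

lemma hasDerivAt_phi (u : ℝ) :
    HasDerivAt (fun u : ℝ => u * Real.log (1 + u ^ 2) + 2 * Real.arctan u)
      (Real.log (1 + u ^ 2) + 2) u := by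
  have h1 : (1:ℝ) + u ^ 2 ≠ 0 := by positivity
  have hden : HasDerivAt (fun u : ℝ => 1 + u ^ 2) (2 * u) u := by
    simpa using (hasDerivAt_pow 2 u).const_add 1
  have hlog : HasDerivAt (fun u : ℝ => Real.log (1 + u ^ 2)) (2 * u / (1 + u ^ 2)) u :=
    hden.log h1
  have harc : HasDerivAt (fun u : ℝ => 2 * Real.arctan u) (2 * (1 / (1 + u ^ 2))) u :=
    (Real.hasDerivAt_arctan u).const_mul 2
  have := ((hasDerivAt_id u).mul hlog).add harc
  convert this using 1
  case e'_4 | e'_5 | e'_8 => rfl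
  simp only [id]
  field_simp
  ring

end Aux

/-- the entropy energy balance of Proposition 3 for
`∂_t g = −Λg + ∂_x(g²·Hg/(1+g²))`, where `Λg = ∂_x(Hg)`. -/
theorem entropy_energy_balance
    (T : ℝ) (hT : 0 < T) (g Hg : ℝ → ℝ → ℝ)
    -- 2π-periodic in x
    (hper : ∀ x : ℝ, ∀ t ∈ Icc (0:ℝ) T, g (x + 2 * Real.pi) t = g x t)
    -- g jointly smooth
    (hg : ContDiffOn ℝ (⊤ : ℕ∞) (fun p : ℝ × ℝ => g p.1 p.2) (univ ×ˢ Icc 0 T))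
    -- Hg is the periodic Hilbert transform of g, jointly smooth
    (hpv : ∀ x : ℝ, ∀ t ∈ Icc (0:ℝ) T, HasPVHilbertT (fun y => g y t) x (Hg x t))
    (hHg : ContDiffOn ℝ (⊤ : ℕ∞) (fun p : ℝ × ℝ => Hg p.1 p.2) (univ ×ˢ Icc 0 T))
    -- the equation ∂_t g = −Λg + ∂_x(g² Hg/(1+g²)) holds pointwise, Λg := ∂_x(Hg)
    (heq : ∀ x : ℝ, ∀ t ∈ Icc (0:ℝ) T,
      HasDerivWithinAt (fun s => g x s)
        (-(deriv (fun y => Hg y t) x)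
          + deriv (fun y => (g y t) ^ 2 * Hg y t / (1 + (g y t) ^ 2)) x) (Icc 0 T) t) :
    ∀ t ∈ Icc (0:ℝ) T,
      (∫ x in (-Real.pi)..Real.pi,
          (g x t * Real.log (1 + (g x t) ^ 2) + 2 * Real.arctan (g x t)))
        = (∫ x in (-Real.pi)..Real.pi,
            (g x 0 * Real.log (1 + (g x 0) ^ 2) + 2 * Real.arctan (g x 0)))
          + ∫ s in (0:ℝ)..t, ∫ x in (-Real.pi)..Real.pi,
              deriv (fun y => Hg y s) x / (1 + (g x s) ^ 2) := by
  intro t ht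
  obtain ⟨ht0, htT⟩ := ht
  have pi_pos := Real.pi_pos
  have hle1 : -Real.pi ≤ Real.pi := by linarith
  have hIccsub : Icc (0:ℝ) t ⊆ Icc (0:ℝ) T := Icc_subset_Icc le_rfl htT
  -- periodicity of Hg
  have hHgper : ∀ x : ℝ, ∀ s ∈ Icc (0:ℝ) T, Hg (x + 2 * Real.pi) s = Hg x s := by
    intro x s hs
    have h1 : Tendsto (fun ε => pvHilbertIntegralT (fun y => g y s) (x + 2 * Real.pi) ε)
        (nhdsWithin 0 (Set.Ioi 0)) (nhds (Hg (x + 2 * Real.pi) s)) := hpv _ s hs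
    have h2 : Tendsto (fun ε => pvHilbertIntegralT (fun y => g y s) x ε)
        (nhdsWithin 0 (Set.Ioi 0)) (nhds (Hg x s)) := hpv x s hs
    have hfun : (fun ε => pvHilbertIntegralT (fun y => g y s) (x + 2 * Real.pi) ε)
        = fun ε => pvHilbertIntegralT (fun y => g y s) x ε := by
      funext ε
      unfold pvHilbertIntegralT
      congr 1
      congr 1
      funext η
      have hx : x + 2 * Real.pi - η = (x - η) + 2 * Real.pi := by ring
      simp only [hx, hper (x - η) s hs]
    rw [hfun] at h1
    exact tendsto_nhds_unique h1 h2
  -- derivative facts for slices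
  have hgd : ∀ s ∈ Icc (0:ℝ) T, ∀ x : ℝ,
      HasDerivAt (fun y => g y s) (deriv (fun y => g y s) x) x :=
    fun s hs x => slice_hasDerivAt hg hs x
  have hHgd : ∀ s ∈ Icc (0:ℝ) T, ∀ x : ℝ,
      HasDerivAt (fun y => Hg y s) (deriv (fun y => Hg y s) x) x :=
    fun s hs x => slice_hasDerivAt hHg hs x
  have hgc := hg.continuousOn
  have hQ : ContDiffOn ℝ (⊤ : ℕ∞)
      (fun p : ℝ × ℝ => (g p.1 p.2) ^ 2 * Hg p.1 p.2 / (1 + (g p.1 p.2) ^ 2))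
      (univ ×ˢ Icc (0:ℝ) T) :=
    ((hg.pow 2).mul hHg).div (contDiffOn_const.add (hg.pow 2)) (fun p _ => by positivity)
  have hDxHg : ContinuousOn (fun p : ℝ × ℝ => deriv (fun y => Hg y p.2) p.1)
      (univ ×ˢ Icc (0:ℝ) T) := slice_deriv_continuousOn hT hHg
  have hDxQ : ContinuousOn
      (fun p : ℝ × ℝ => deriv (fun y => (g y p.2) ^ 2 * Hg y p.2 / (1 + (g y p.2) ^ 2)) p.1)
      (univ ×ˢ Icc (0:ℝ) T) := slice_deriv_continuousOn hT hQ
  -- the time-derivative integrand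
  set h : ℝ → ℝ → ℝ := fun x s => (Real.log (1 + (g x s) ^ 2) + 2) *
      (-(deriv (fun y => Hg y s) x)
        + deriv (fun y => (g y s) ^ 2 * Hg y s / (1 + (g y s) ^ 2)) x) with hh_def
  have hhc : ContinuousOn (fun p : ℝ × ℝ => h p.1 p.2) (univ ×ˢ Icc (0:ℝ) T) := by
    rw [hh_def]
    exact (((continuousOn_const.add (hgc.pow 2)).log (fun p _ => by simp only [Pi.add_apply, Pi.pow_apply]; positivity)).add
      continuousOn_const).mul (hDxHg.neg.add hDxQ)
  -- FTC in time, for each fixed x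
  have hFTCt : ∀ x : ℝ,
      g x t * Real.log (1 + (g x t) ^ 2) + 2 * Real.arctan (g x t)
        - (g x 0 * Real.log (1 + (g x 0) ^ 2) + 2 * Real.arctan (g x 0))
      = ∫ s in (0:ℝ)..t, h x s := by
    intro x
    refine (intervalIntegral.integral_eq_sub_of_hasDeriv_right_of_le (f := fun s =>
      g x s * Real.log (1 + (g x s) ^ 2) + 2 * Real.arctan (g x s))
      (f' := fun s => h x s) ht0 ?_ ?_ ?_).symm
    · have hcs : ContinuousOn (fun s => g x s) (Icc (0:ℝ) t) :=
        (contOn_slice_t hgc x).mono hIccsub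
      exact (hcs.mul ((continuousOn_const.add (hcs.pow 2)).log
        (fun s _ => by simp only [Pi.add_apply, Pi.pow_apply]; positivity))).add
        (continuousOn_const.mul (Real.continuous_arctan.comp_continuousOn hcs))
    · intro s hs
      have hsT : s ∈ Icc (0:ℝ) T := ⟨hs.1.le, (hs.2.le.trans htT)⟩
      have hmem : Icc (0:ℝ) T ∈ nhds s := Icc_mem_nhds hs.1 (hs.2.trans_le htT)
      have hgt : HasDerivAt (fun s' => g x s')
          (-(deriv (fun y => Hg y s) x)
            + deriv (fun y => (g y s) ^ 2 * Hg y s / (1 + (g y s) ^ 2)) x) s :=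
        (heq x s hsT).hasDerivAt hmem
      have hcomp := (hasDerivAt_phi (g x s)).comp s hgt
      have h2 : HasDerivAt
          (fun s' => g x s' * Real.log (1 + (g x s') ^ 2) + 2 * Real.arctan (g x s'))
          (h x s) s := by
        rw [hh_def]
        simpa [Function.comp_def] using hcomp
      exact h2.hasDerivWithinAt
    · have hcont : ContinuousOn (fun s => h x s) (uIcc (0:ℝ) t) := by
        rw [uIcc_of_le ht0]
        exact (contOn_slice_t hhc x).mono hIccsub
      exact hcont.intervalIntegrable
  -- integrate over x
  have htmem : t ∈ Icc (0:ℝ) T := ⟨ht0, htT⟩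
  have h0mem : (0:ℝ) ∈ Icc (0:ℝ) T := ⟨le_rfl, hT.le⟩
  have hint_slice : ∀ s ∈ Icc (0:ℝ) T, IntervalIntegrable
      (fun x => g x s * Real.log (1 + (g x s) ^ 2) + 2 * Real.arctan (g x s))
      volume (-Real.pi) Real.pi := by
    intro s hs
    have hcx : Continuous (fun x => g x s) := contOn_slice_x hgc hs
    exact ((hcx.mul ((continuous_const.add (hcx.pow 2)).log
      (fun x => by simp only [Pi.add_apply, Pi.pow_apply]; positivity))).add
      (continuous_const.mul (Real.continuous_arctan.comp hcx))).intervalIntegrable _ _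
  have key1 : (∫ x in (-Real.pi)..Real.pi,
        (g x t * Real.log (1 + (g x t) ^ 2) + 2 * Real.arctan (g x t)))
      - (∫ x in (-Real.pi)..Real.pi,
        (g x 0 * Real.log (1 + (g x 0) ^ 2) + 2 * Real.arctan (g x 0)))
      = ∫ x in (-Real.pi)..Real.pi, ∫ s in (0:ℝ)..t, h x s := by
    rw [← intervalIntegral.integral_sub (hint_slice t htmem) (hint_slice 0 h0mem)]
    exact intervalIntegral.integral_congr (fun x _ => hFTCt x)
  -- Fubini swap
  have hswap : (∫ x in (-Real.pi)..Real.pi, ∫ s in (0:ℝ)..t, h x s)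
      = ∫ s in (0:ℝ)..t, ∫ x in (-Real.pi)..Real.pi, h x s := by
    have hsub : Icc (-Real.pi) Real.pi ×ˢ Icc (0:ℝ) t ⊆ (univ : Set ℝ) ×ˢ Icc (0:ℝ) T :=
      prod_mono (subset_univ _) hIccsub
    have hIcc : IntegrableOn (Function.uncurry h)
        (Icc (-Real.pi) Real.pi ×ˢ Icc (0:ℝ) t) volume :=
      ContinuousOn.integrableOn_compact (isCompact_Icc.prod isCompact_Icc) (hhc.mono hsub)
    have hInt : Integrable (Function.uncurry h)
        ((volume.restrict (Ioc (-Real.pi) Real.pi)).prod (volume.restrict (Ioc (0:ℝ) t))) := by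
      rw [Measure.prod_restrict, ← Measure.volume_eq_prod]
      exact hIcc.mono_set (prod_mono Ioc_subset_Icc_self Ioc_subset_Icc_self)
    simp only [intervalIntegral.integral_of_le hle1, intervalIntegral.integral_of_le ht0]
    exact integral_integral_swap hInt
  -- spatial identity for each time slice
  have hxint : ∀ s ∈ Icc (0:ℝ) t,
      (∫ x in (-Real.pi)..Real.pi, h x s)
        = ∫ x in (-Real.pi)..Real.pi, deriv (fun y => Hg y s) x / (1 + (g x s) ^ 2) := by
    intro s hs'
    have hsT : s ∈ Icc (0:ℝ) T := hIccsub hs'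
    have hch : Continuous (fun x => h x s) := contOn_slice_x hhc hsT
    have hcb : Continuous (fun x => deriv (fun y => Hg y s) x / (1 + (g x s) ^ 2)) :=
      (contOn_slice_x hDxHg hsT).div
        (continuous_const.add ((contOn_slice_x hgc hsT).pow 2)) (fun x => by positivity)
    have hwd : ∀ y : ℝ, HasDerivAt
        (fun y' => -(Real.log (1 + (g y' s) ^ 2) + 3) * Hg y' s / (1 + (g y' s) ^ 2))
        (h y s - deriv (fun y' => Hg y' s) y / (1 + (g y s) ^ 2)) y := by
      intro y
      have hgy := hgd s hsT y
      have hHy := hHgd s hsT y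
      have h1 : (1:ℝ) + (g y s) ^ 2 ≠ 0 := by positivity
      have hden : HasDerivAt (fun y' => 1 + (g y' s) ^ 2)
          ((2:ℕ) * g y s ^ 1 * deriv (fun y' => g y' s) y) y := (hgy.pow 2).const_add 1
      have HQ := ((hgy.pow 2).mul hHy).div hden h1
      have hBIG := HQ.deriv
      have HW := ((((hden.log h1).add_const 3).neg.mul hHy).div hden h1)
      convert HW using 1
      case e'_4 | e'_5 | e'_8 => rfl
      rw [hh_def]
      simp only []
      rw [show deriv (fun y => g y s ^ 2 * Hg y s / (1 + g y s ^ 2)) y = _ from hBIG]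
      simp only [Pi.mul_apply, Pi.pow_apply, Pi.neg_apply, Pi.add_apply]
      field_simp
      ring
    have hzero := intervalIntegral.integral_eq_sub_of_hasDerivAt (a := -Real.pi) (b := Real.pi)
      (f := fun y' => -(Real.log (1 + (g y' s) ^ 2) + 3) * Hg y' s / (1 + (g y' s) ^ 2))
      (fun y _ => hwd y) ((hch.sub hcb).intervalIntegrable _ _)
    have hgp := hper (-Real.pi) s hsT
    rw [show -Real.pi + 2 * Real.pi = Real.pi by ring] at hgp
    have hHp := hHgper (-Real.pi) s hsT
    rw [show -Real.pi + 2 * Real.pi = Real.pi by ring] at hHp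
    beta_reduce at hzero
    rw [hgp, hHp, sub_self] at hzero
    rw [intervalIntegral.integral_sub (hch.intervalIntegrable _ _)
      (hcb.intervalIntegrable _ _)] at hzero
    linarith [hzero]
  have hswapcongr : (∫ s in (0:ℝ)..t, ∫ x in (-Real.pi)..Real.pi, h x s)
      = ∫ s in (0:ℝ)..t, ∫ x in (-Real.pi)..Real.pi,
          deriv (fun y => Hg y s) x / (1 + (g x s) ^ 2) := by
    apply intervalIntegral.integral_congr
    intro s hs'
    rw [uIcc_of_le ht0] at hs'
    exact hxint s hs'
  linarith [key1, hswap, hswapcongr]
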